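/- Let η : ℝ → ℝ be convex and continuously differentiable, let F : ℝ → ℝ^k be continuously differentiable, fix c ∈ ℝ, and define Q : ℝ → ℝ^k componentwise by Q_j(u) = ∫_c^u η'(r)·F_j'(r) dr. Let a, b ∈ ℝ, n ∈ ℝ^k, and let C ∈ ℝ satisfy C ≥ (1/2)·∫_0^1 |F'(a + ξ·(b − a)) · n| dξ. Then (Q(b) − Q(a) − (1/2)·(F(b) − F(a))·(η'(b) + η'(a))) · n + C·(η'(b) − η'(a))·(b − a) ≥ 0. -/

import Mathlib

/-!
Projecting onto `n` reduces everything to the scalar flux `f = F · n`, with `φ = η'` monotone.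
Since `f(b) - f(a) = ∫_a^b f'`, the face term is `∫_a^b (φ - m) f'` with `m` the mean of `φ(a)` and
`φ(b)`. On the segment `φ` lies between `φ(a)` and `φ(b)`, so `|φ - m| ≤ |φ(b) - φ(a)| / 2` and the
integral is at least `-½ |φ(b) - φ(a)| |b - a| ∫_0^1 |f'(a + ξ(b - a))| dξ`, which the stabilization
term `C (φ(b) - φ(a))(b - a) = C |φ(b) - φ(a)| |b - a|` compensates.
-/

open intervalIntegral Set

lemma abs_sub_midpoint_le_of_mem_uIcc {x u v : ℝ} (hx : x ∈ uIcc u v) :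
    |x - (u + v) / 2| ≤ |v - u| / 2 := by
  rw [mem_uIcc] at hx
  rcases hx with ⟨hux, hxv⟩ | ⟨hvx, hxu⟩
  · rw [abs_of_nonneg (by linarith : 0 ≤ v - u), abs_le]; constructor <;> linarith
  · rw [abs_of_nonpos (by linarith : v - u ≤ 0), abs_le]; constructor <;> linarith

lemma intervalIntegral.integral_eq_sub_mul_integral_comp_unitInterval (f : ℝ → ℝ) (a b : ℝ) :
    ∫ x in a..b, f x = (b - a) * ∫ ξ in (0:ℝ)..1, f (a + ξ * (b - a)) := by
  simpa [mul_comm] using (smul_integral_comp_add_mul (a := 0) (b := 1) f (b - a) a).symm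

lemma abs_integral_sub_midpoint_mul_le {φ g : ℝ → ℝ} {a b : ℝ} (hφ : Monotone φ)
    (hg : IntervalIntegrable g MeasureTheory.volume a b) :
    |∫ r in a..b, (φ r - (φ a + φ b) / 2) * g r| ≤ |φ b - φ a| / 2 * |(∫ r in a..b, |g r|)| := by
  calc |∫ r in a..b, (φ r - (φ a + φ b) / 2) * g r|
      ≤ |(∫ r in a..b, |φ b - φ a| / 2 * |g r|)| := by
        refine norm_integral_le_abs_of_norm_le (E := ℝ)
          (MeasureTheory.ae_restrict_of_forall_mem measurableSet_uIoc fun r hr => ?_)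
          (hg.abs.const_mul _)
        rw [Real.norm_eq_abs, abs_mul]
        exact mul_le_mul_of_nonneg_right
          (abs_sub_midpoint_le_of_mem_uIcc (hφ.mapsTo_uIcc (uIoc_subset_uIcc hr))) (abs_nonneg _)
    _ = |φ b - φ a| / 2 * |(∫ r in a..b, |g r|)| := by
        rw [integral_const_mul, abs_mul, abs_of_nonneg (by positivity)]

theorem entropy_face_term_nonneg_of_monotone {φ f : ℝ → ℝ} (hφ : Monotone φ)
    (hφc : Continuous φ) (hf : ContDiff ℝ 1 f) {a b C : ℝ}
    (hC : 1 / 2 * ∫ ξ in (0:ℝ)..1, |deriv f (a + ξ * (b - a))| ≤ C) :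
    0 ≤ (∫ r in a..b, φ r * deriv f r) - 1 / 2 * (f b - f a) * (φ b + φ a)
      + C * ((φ b - φ a) * (b - a)) := by
  have hf' : Continuous (deriv f) := hf.continuous_deriv le_rfl
  have hcentered : (∫ r in a..b, φ r * deriv f r) - 1 / 2 * (f b - f a) * (φ b + φ a)
      = ∫ r in a..b, (φ r - (φ a + φ b) / 2) * deriv f r := by
    simp_rw [sub_mul]
    rw [integral_sub ((by fun_prop : Continuous fun r => φ r * deriv f r).intervalIntegrable a b)
        ((by fun_prop : Continuous fun r => (φ a + φ b) / 2 * deriv f r).intervalIntegrable a b),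
      integral_const_mul,
      integral_deriv_eq_sub (fun x _ => (hf.differentiable one_ne_zero).differentiableAt)
        (hf'.intervalIntegrable a b)]
    ring
  set J := ∫ ξ in (0:ℝ)..1, |deriv f (a + ξ * (b - a))|
  have hJ : 0 ≤ J := integral_nonneg zero_le_one fun _ _ => abs_nonneg _
  have hbound := abs_integral_sub_midpoint_mul_le hφ (hf'.intervalIntegrable a b)
  rw [integral_eq_sub_mul_integral_comp_unitInterval (fun r => |deriv f r|), abs_mul,
    abs_of_nonneg hJ] at hbound
  have hsign : (φ b - φ a) * (b - a) = |φ b - φ a| * |b - a| := by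
    rw [← abs_mul, abs_of_nonneg]
    rcases le_total a b with hab | hba
    · exact mul_nonneg (sub_nonneg.2 (hφ hab)) (sub_nonneg.2 hab)
    · exact mul_nonneg_of_nonpos_of_nonpos (sub_nonpos.2 (hφ hba)) (sub_nonpos.2 hba)
  have hstab : 1 / 2 * J * (|φ b - φ a| * |b - a|) ≤ C * (|φ b - φ a| * |b - a|) :=
    mul_le_mul_of_nonneg_right hC (by positivity)
  rw [hcentered, hsign]
  nlinarith [neg_abs_le (∫ r in a..b, (φ r - (φ a + φ b) / 2) * deriv f r)]

/-- Nonnegativity of the combined face terms (`E₂ + E₃`, resp. `E₄ + E₅`) of the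
DG(p)-method: for the entropy flux `Q_j(u) = ∫_c^u η'(r) F_j'(r) dr` associated with
a convex `C¹` entropy `η` and a `C¹` flux `F : ℝ → ℝ^k`, traces `a = v⁻`, `b = v⁺`,
a face normal `n`, and a stabilization constant `C ≥ ½ ∫_0^1 |F'(a + ξ(b−a)) · n| dξ`,
`(Q(b) − Q(a) − ½(F(b) − F(a))(η'(b) + η'(a))) · n + C (η'(b) − η'(a)) (b − a) ≥ 0`. -/
theorem entropy_face_terms_nonneg {k : ℕ} (η : ℝ → ℝ)
    (hconv : ConvexOn ℝ Set.univ η) (hη : ContDiff ℝ 1 η)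
    (F : ℝ → Fin k → ℝ) (hF : ∀ j, ContDiff ℝ 1 fun u => F u j)
    (c : ℝ) (Q : ℝ → Fin k → ℝ)
    (hQ : ∀ u j, Q u j = ∫ r in c..u, deriv η r * deriv (fun x => F x j) r)
    (a b : ℝ) (n : Fin k → ℝ) (C : ℝ)
    (hC : (1 / 2) * (∫ ξ in (0:ℝ)..1, |∑ j, deriv (fun x => F x j) (a + ξ * (b - a)) * n j|) ≤ C) :
    0 ≤ (∑ j, (Q b j - Q a j - (1 / 2) * (F b j - F a j) * (deriv η b + deriv η a)) * n j)
          + C * ((deriv η b - deriv η a) * (b - a)) := by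
  have hmono : Monotone (deriv η) := monotoneOn_univ.mp <|
    hconv.monotoneOn_deriv fun x _ => (hη.differentiable one_ne_zero).differentiableAt
  have hη' : Continuous (deriv η) := hη.continuous_deriv le_rfl
  have hF' j : Continuous (deriv fun x => F x j) := (hF j).continuous_deriv le_rfl
  set f : ℝ → ℝ := fun u => ∑ j, F u j * n j
  have hf : ContDiff ℝ 1 f := ContDiff.sum fun j _ => (hF j).mul contDiff_const
  have hdf : deriv f = fun u => ∑ j, deriv (fun x => F x j) u * n j := by
    ext u
    rw [deriv_fun_sum fun j _ => ((hF j).differentiable one_ne_zero).differentiableAt.mul_const _]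
    exact Finset.sum_congr rfl fun j _ => deriv_mul_const_field _
  have hQf : ∑ j, (Q b j - Q a j) * n j = ∫ r in a..b, deriv η r * deriv f r := by
    have hQsub j : Q b j - Q a j = ∫ r in a..b, deriv η r * deriv (fun x => F x j) r := by
      rw [hQ, hQ]
      exact integral_interval_sub_left ((hη'.mul (hF' j)).intervalIntegrable _ _)
        ((hη'.mul (hF' j)).intervalIntegrable _ _)
    simp_rw [hQsub, hdf, Finset.mul_sum, ← integral_mul_const, mul_assoc]
    exact (integral_finsetSum fun j _ =>
      (hη'.mul ((hF' j).mul continuous_const)).intervalIntegrable _ _).symm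
  have key := entropy_face_term_nonneg_of_monotone hmono hη' hf (by simpa only [hdf] using hC)
  rw [← hQf] at key
  convert key using 2
  simp only [f, ← Finset.sum_sub_distrib, Finset.mul_sum, Finset.sum_mul]
  exact Finset.sum_congr rfl fun j _ => by ring
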